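/- arXiv:1104.0068 — 2 statements merged into one kernel-verified Lean document; each statement's English description precedes it below -/
import Mathlib

section
/- In the algebra P (generators e_i, f_i, K with the anticommutation relations and K² = 1), the elements T± = (1 ± K)/2 are primitive idempotents, and the left ideals Q± = P·T± are indecomposable projective left P-modules with P = Q⁺ ⊕ Q⁻. -/
/-- Generators of the algebra `P`: `e i`, `f i` (`1 ≤ i ≤ d`) and `K`. -/
inductive SFGen (d : ℕ) : Type
  | e : Fin d → SFGen d
  | f : Fin d → SFGen d
  | K : SFGen d

/-- The defining relations of `P`: `K² = 1`, the `e i`, `f j` pairwise anticommute,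
and `K` anticommutes with every `e i` and `f i`. -/
inductive SFRel (d : ℕ) : FreeAlgebra ℂ (SFGen d) → FreeAlgebra ℂ (SFGen d) → Prop
  | Ksq : SFRel d (FreeAlgebra.ι ℂ (SFGen.K (d := d)) * FreeAlgebra.ι ℂ SFGen.K) 1
  | ee (i j : Fin d) : SFRel d (FreeAlgebra.ι ℂ (SFGen.e i) * FreeAlgebra.ι ℂ (SFGen.e j))
      (-(FreeAlgebra.ι ℂ (SFGen.e j) * FreeAlgebra.ι ℂ (SFGen.e i)))
  | ff (i j : Fin d) : SFRel d (FreeAlgebra.ι ℂ (SFGen.f i) * FreeAlgebra.ι ℂ (SFGen.f j))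
      (-(FreeAlgebra.ι ℂ (SFGen.f j) * FreeAlgebra.ι ℂ (SFGen.f i)))
  | ef (i j : Fin d) : SFRel d (FreeAlgebra.ι ℂ (SFGen.e i) * FreeAlgebra.ι ℂ (SFGen.f j))
      (-(FreeAlgebra.ι ℂ (SFGen.f j) * FreeAlgebra.ι ℂ (SFGen.e i)))
  | Ke (i : Fin d) : SFRel d (FreeAlgebra.ι ℂ (SFGen.K (d := d)) * FreeAlgebra.ι ℂ (SFGen.e i))
      (-(FreeAlgebra.ι ℂ (SFGen.e i) * FreeAlgebra.ι ℂ SFGen.K))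
  | Kf (i : Fin d) : SFRel d (FreeAlgebra.ι ℂ (SFGen.K (d := d)) * FreeAlgebra.ι ℂ (SFGen.f i))
      (-(FreeAlgebra.ι ℂ (SFGen.f i) * FreeAlgebra.ι ℂ SFGen.K))

/-- The algebra `P` generated by `e i`, `f i` (`1 ≤ i ≤ d`) and `K` with the above
relations. -/
def SF (d : ℕ) : Type := RingQuot (SFRel d)

noncomputable instance (d : ℕ) : Ring (SF d) := inferInstanceAs (Ring (RingQuot (SFRel d)))
noncomputable instance (d : ℕ) : Algebra ℂ (SF d) :=
  inferInstanceAs (Algebra ℂ (RingQuot (SFRel d)))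

/-- The generator `e i` of `P`. -/
noncomputable def eg (d : ℕ) (i : Fin d) : SF d :=
  RingQuot.mkAlgHom ℂ (SFRel d) (FreeAlgebra.ι ℂ (SFGen.e i))

/-- The generator `f i` of `P`. -/
noncomputable def fg (d : ℕ) (i : Fin d) : SF d :=
  RingQuot.mkAlgHom ℂ (SFRel d) (FreeAlgebra.ι ℂ (SFGen.f i))

/-- The generator `K` of `P`. -/
noncomputable def Kg (d : ℕ) : SF d :=
  RingQuot.mkAlgHom ℂ (SFRel d) (FreeAlgebra.ι ℂ SFGen.K)

/-- The monomial `(∏ᵢ e iᵐⁱ f iⁿⁱ) Kˡ` of `P`, in the order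
`e 1^{m₁} f 1^{n₁} ⋯ e d^{m_d} f d^{n_d} K^ℓ`. -/
noncomputable def SFmono (d : ℕ) (m n : Fin d → Bool) (ℓ : Bool) : SF d :=
  (List.ofFn (fun i : Fin d =>
      (if m i then eg d i else 1) * (if n i then fg d i else 1))).prod *
    (if ℓ then Kg d else 1)

/-- `T⁺ = (1 + K)/2`. -/
noncomputable def Tp (d : ℕ) : SF d := (2 : ℂ)⁻¹ • (1 + Kg d)

/-- `T⁻ = (1 − K)/2`. -/
noncomputable def Tm (d : ℕ) : SF d := (2 : ℂ)⁻¹ • (1 - Kg d)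

/-- The left ideal `Q⁺ = P·T⁺`. -/
noncomputable def Qp (d : ℕ) : Submodule (SF d) (SF d) := Submodule.span (SF d) {Tp d}

/-- The left ideal `Q⁻ = P·T⁻`. -/
noncomputable def Qm (d : ℕ) : Submodule (SF d) (SF d) := Submodule.span (SF d) {Tm d}

/-- A primitive idempotent: a nonzero idempotent which is not the sum of two nonzero
orthogonal idempotents. -/
def IsPrimitiveIdempotent {R : Type*} [Ring R] (t : R) : Prop :=
  IsIdempotentElem t ∧ t ≠ 0 ∧
    ∀ a b : R, IsIdempotentElem a → IsIdempotentElem b →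
      a * b = 0 → b * a = 0 → a + b = t → a = 0 ∨ b = 0


section Basic
variable {d : ℕ}

lemma half_half : ((2:ℂ)⁻¹ * 2⁻¹ : ℂ) = 2⁻¹ * 2⁻¹ := rfl

lemma Kg_sq (d : ℕ) : Kg d * Kg d = 1 := by
  have h := RingQuot.mkAlgHom_rel ℂ (SFRel.Ksq (d := d))
  simp [Kg, map_mul, map_one] at h ⊢; exact h

/-- letters -/
noncomputable def ltr (d : ℕ) : Fin d ⊕ Fin d → SF d := Sum.elim (eg d) (fg d)

lemma smul_cancel {M : Type*} [AddCommGroup M] [Module ℂ M] {x : M} (h : x = -x) : x = 0 := by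
  have h2 : (2:ℂ) • x = 0 := by
    rw [two_smul]; nth_rewrite 1 [h]; simp
  have := congrArg (fun y => ((2:ℂ)⁻¹) • y) h2
  simpa [smul_smul] using this

lemma ltr_anticomm (x y : Fin d ⊕ Fin d) : ltr d x * ltr d y = -(ltr d y * ltr d x) := by
  rcases x with i | i <;> rcases y with j | j
  · have h := RingQuot.mkAlgHom_rel ℂ (SFRel.ee (d := d) i j)
    simp [ltr, eg, map_mul, map_neg] at h ⊢; exact h
  · have h := RingQuot.mkAlgHom_rel ℂ (SFRel.ef (d := d) i j)
    simp [ltr, eg, fg, map_mul, map_neg] at h ⊢; exact h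
  · have h := RingQuot.mkAlgHom_rel ℂ (SFRel.ef (d := d) j i)
    have h' : eg d j * fg d i = -(fg d i * eg d j) := by
      simp [eg, fg, map_mul, map_neg] at h ⊢; exact h
    simp [ltr, eq_neg_iff_add_eq_zero] at h' ⊢
    linear_combination (norm := noncomm_ring) h'
  · have h := RingQuot.mkAlgHom_rel ℂ (SFRel.ff (d := d) i j)
    simp [ltr, fg, map_mul, map_neg] at h ⊢; exact h

lemma ltr_sq (x : Fin d ⊕ Fin d) : ltr d x * ltr d x = 0 :=
  smul_cancel (ltr_anticomm x x)

lemma K_ltr (x : Fin d ⊕ Fin d) : Kg d * ltr d x = -(ltr d x * Kg d) := by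
  rcases x with i | i
  · have h := RingQuot.mkAlgHom_rel ℂ (SFRel.Ke (d := d) i)
    simp [ltr, eg, Kg, map_mul, map_neg] at h ⊢; exact h
  · have h := RingQuot.mkAlgHom_rel ℂ (SFRel.Kf (d := d) i)
    simp [ltr, fg, Kg, map_mul, map_neg] at h ⊢; exact h

end Basic

section Mono
variable {d : ℕ}

noncomputable def pL (d : ℕ) (L : List (Fin d ⊕ Fin d)) : SF d := (L.map (ltr d)).prod

noncomputable def Kb (d : ℕ) (b : Bool) : SF d := if b then Kg d else 1

@[simp] lemma pL_nil : pL d [] = 1 := rfl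
@[simp] lemma pL_cons (a : Fin d ⊕ Fin d) (L : List (Fin d ⊕ Fin d)) :
    pL d (a :: L) = ltr d a * pL d L := by simp [pL]
lemma pL_append (L M : List (Fin d ⊕ Fin d)) : pL d (L ++ M) = pL d L * pL d M := by
  simp [pL]

lemma ltr_pL (a : Fin d ⊕ Fin d) (L : List (Fin d ⊕ Fin d)) :
    ltr d a * pL d L = ((-1 : ℂ) ^ L.length) • (pL d L * ltr d a) := by
  induction L with
  | nil => simp
  | cons x t ih =>
    rw [pL_cons, ← mul_assoc, ltr_anticomm a x, neg_mul, mul_assoc, ih]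
    simp [pow_succ, mul_smul, mul_assoc]

lemma K_pL (L : List (Fin d ⊕ Fin d)) :
    Kg d * pL d L = ((-1 : ℂ) ^ L.length) • (pL d L * Kg d) := by
  induction L with
  | nil => simp
  | cons x t ih =>
    rw [pL_cons, ← mul_assoc, K_ltr x, neg_mul, mul_assoc, ih]
    simp [pow_succ, mul_smul, mul_assoc]

lemma pL_dup (L : List (Fin d ⊕ Fin d)) (h : ¬ L.Nodup) : pL d L = 0 := by
  induction L with
  | nil => simp at h
  | cons a t ih =>
    rcases Classical.em (a ∈ t) with ha | ha
    · obtain ⟨s, u, rfl⟩ := List.append_of_mem ha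
      rw [pL_cons, pL_append, pL_cons, ← mul_assoc, ltr_pL a s]
      rw [smul_mul_assoc, mul_assoc, ← mul_assoc (ltr d a), ltr_sq]
      simp
    · have : ¬ t.Nodup := fun hn => h (List.nodup_cons.mpr ⟨ha, hn⟩)
      rw [pL_cons, ih this, mul_zero]

lemma pL_long (L : List (Fin d ⊕ Fin d)) (h : 2 * d + 1 ≤ L.length) : pL d L = 0 := by
  apply pL_dup
  intro hn
  have := hn.length_le_card
  simp [Fintype.card_sum] at this
  omega

lemma mul_mono (L L' : List (Fin d ⊕ Fin d)) (b b' : Bool) :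
    ∃ c : ℂ, (pL d L * Kb d b) * (pL d L' * Kb d b') =
      c • (pL d (L ++ L') * Kb d (xor b b')) := by
  cases b
  · exact ⟨1, by simp [Kb, pL_append, mul_assoc]⟩
  · refine ⟨(-1 : ℂ) ^ L'.length, ?_⟩
    have hK := K_pL (d := d) L'
    cases b' <;>
      simp only [Kb, if_true, if_false, Bool.xor_false, Bool.xor_true, mul_one, Bool.true_xor] <;>
      rw [mul_assoc, ← mul_assoc (Kg d), hK] <;>
      simp [pL_append, smul_mul_assoc, mul_smul_comm, mul_assoc, Kg_sq]

end Mono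

section Eps
variable {d : ℕ}

/-- the value of generators for ε -/
noncomputable def εgen (d : ℕ) : SFGen d → ℂ × ℂ
  | SFGen.e _ => 0
  | SFGen.f _ => 0
  | SFGen.K => (1, -1)

/-- the augmentation `ε : SF d →ₐ[ℂ] ℂ × ℂ`. -/
noncomputable def ε (d : ℕ) : SF d →ₐ[ℂ] ℂ × ℂ :=
  RingQuot.liftAlgHom ℂ ⟨FreeAlgebra.lift ℂ (εgen d), by
    intro x y h
    induction h <;> simp [εgen, Prod.ext_iff]⟩

@[simp] lemma ε_eg (i : Fin d) : ε d (eg d i) = 0 := by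
  rw [ε, eg]; erw [RingQuot.liftAlgHom_mkAlgHom_apply, FreeAlgebra.lift_ι_apply]; rfl

@[simp] lemma ε_fg (i : Fin d) : ε d (fg d i) = 0 := by
  rw [ε, fg]; erw [RingQuot.liftAlgHom_mkAlgHom_apply, FreeAlgebra.lift_ι_apply]; rfl

@[simp] lemma ε_Kg : ε d (Kg d) = (1, -1) := by
  rw [ε, Kg]; erw [RingQuot.liftAlgHom_mkAlgHom_apply, FreeAlgebra.lift_ι_apply]; rfl

@[simp] lemma ε_ltr (x : Fin d ⊕ Fin d) : ε d (ltr d x) = 0 := by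
  rcases x with i | i <;> simp [ltr]

end Eps

section Filt
variable {d : ℕ}

/-- span of monomials with at least `j` letters. -/
noncomputable def Efil (d j : ℕ) : Submodule ℂ (SF d) :=
  Submodule.span ℂ {x | ∃ L b, j ≤ L.length ∧ x = pL d L * Kb d b}

lemma Efil_mul {j k : ℕ} {x y : SF d} (hx : x ∈ Efil d j) (hy : y ∈ Efil d k) :
    x * y ∈ Efil d (j + k) := by
  induction hx using Submodule.span_induction with
  | zero => simp [Submodule.zero_mem]
  | add a b _ _ ha hb => rw [add_mul]; exact Submodule.add_mem _ ha hb
  | smul c a _ ha => rw [smul_mul_assoc]; exact Submodule.smul_mem _ _ ha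
  | mem a hmem =>
    obtain ⟨L, b, hL, rfl⟩ := hmem
    induction hy using Submodule.span_induction with
    | zero => simp [Submodule.zero_mem]
    | add a' b' _ _ ha hb => rw [mul_add]; exact Submodule.add_mem _ ha hb
    | smul c a' _ ha => rw [mul_smul_comm]; exact Submodule.smul_mem _ _ ha
    | mem a' hmem' =>
      obtain ⟨L', b', hL', rfl⟩ := hmem'
      obtain ⟨c, hc⟩ := mul_mono L L' b b'
      rw [hc]
      refine Submodule.smul_mem _ _ (Submodule.subset_span ?_)
      exact ⟨L ++ L', xor b b', by simp; omega, rfl⟩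

lemma Efil_top (x : SF d) : x ∈ Efil d 0 := by
  obtain ⟨y, rfl⟩ := RingQuot.mkAlgHom_surjective ℂ (SFRel d) x
  induction y using FreeAlgebra.induction with
  | grade0 r =>
    rw [AlgHom.commutes, Algebra.algebraMap_eq_smul_one]
    refine Submodule.smul_mem _ _ (Submodule.subset_span ⟨[], false, by simp, by simp [Kb]; rfl⟩)
  | grade1 g =>
    refine Submodule.subset_span ?_
    rcases g with i | i
    · exact ⟨[Sum.inl i], false, by simp, by simp [Kb, pL, ltr, eg]; exact List.prod_singleton.symm⟩
    · exact ⟨[Sum.inr i], false, by simp, by simp [Kb, pL, ltr, fg]; exact List.prod_singleton.symm⟩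
    · exact ⟨[], true, by simp, by simp [Kb, pL, Kg]; exact (one_mul _).symm⟩
  | mul a b ha hb =>
    rw [map_mul]
    have h := Efil_mul (j := 0) (k := 0) ha hb
    exact h
  | add a b ha hb =>
    rw [map_add]; exact Submodule.add_mem _ ha hb

lemma Efil_bot : Efil d (2 * d + 1) = ⊥ := by
  rw [eq_bot_iff]
  rw [Efil, Submodule.span_le]
  rintro x ⟨L, b, hL, rfl⟩
  rw [pL_long L hL, zero_mul]
  exact Submodule.zero_mem _

lemma ε_Efil {x : SF d} (hx : x ∈ Efil d 1) : ε d x = 0 := by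
  induction hx using Submodule.span_induction with
  | zero => simp
  | add a b _ _ ha hb => rw [map_add, ha, hb, add_zero]
  | smul c a _ ha => rw [map_smul, ha, smul_zero]
  | mem a hmem =>
    obtain ⟨L, b, hL, rfl⟩ := hmem
    match L, hL with
    | a :: t, _ =>
      rw [pL_cons, mul_assoc, map_mul, ε_ltr, zero_mul]

lemma pow_mem_Efil {x : SF d} (hx : x ∈ Efil d 1) (n : ℕ) : x ^ (n + 1) ∈ Efil d (n + 1) := by
  induction n with
  | zero => simpa using hx
  | succ m ih =>
    have := Efil_mul ih hx
    rw [← pow_succ] at this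
    convert this using 2

lemma idem_pow {x : SF d} (hx : x * x = x) (n : ℕ) : x ^ (n + 1) = x := by
  induction n with
  | zero => simp
  | succ m ih => rw [pow_succ, ih, hx]

/-- Lemma A : an idempotent with ε zero is zero -/
lemma idem_eps_zero {w : SF d} (hw : w * w = w) (hε : ε d w = 0) : w = 0 := by
  -- decompose w
  have hmem : w ∈ Submodule.span ℂ {(1 : SF d), Kg d} ⊔ Efil d 1 := by
    have : (Efil d 0 : Submodule ℂ (SF d)) ≤ Submodule.span ℂ {(1 : SF d), Kg d} ⊔ Efil d 1 := by
      rw [Efil, Submodule.span_le]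
      rintro x ⟨L, b, _, rfl⟩
      match L with
      | [] =>
        apply Submodule.mem_sup_left
        cases b <;> simp [Kb] <;>
          exact Submodule.subset_span (by simp)
      | a :: t =>
        exact Submodule.mem_sup_right (Submodule.subset_span ⟨a :: t, b, by simp, rfl⟩)
    exact this (Efil_top w)
  obtain ⟨y, hy, z, hz, rfl⟩ := Submodule.mem_sup.mp hmem
  obtain ⟨a, b, rfl⟩ := Submodule.mem_span_pair.mp hy
  have hεz := ε_Efil hz
  have h1 : a + b = 0 ∧ a - b = 0 := by
    have := hε
    rw [map_add, hεz, add_zero, map_add, map_smul, map_smul, map_one, ε_Kg] at this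
    rw [Prod.ext_iff] at this
    simp [Prod.smul_def] at this
    constructor
    · linear_combination this.1
    · linear_combination this.2
  have ha : a = 0 := by linear_combination (h1.1 + h1.2) / 2
  have hb : b = 0 := by linear_combination (h1.1 - h1.2) / 2
  subst ha hb
  simp only [zero_smul, zero_add] at hw ⊢
  have := pow_mem_Efil hz (2 * d)
  rw [idem_pow hw] at this
  rw [Efil_bot] at this
  simpa using this

end Filt

section TpTm
variable {d : ℕ}

lemma c_idem {c : ℂ} (h : c * c = c) : c = 0 ∨ c = 1 := by
  have h2 : c * (c - 1) = 0 := by linear_combination h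
  rcases mul_eq_zero.mp h2 with h3 | h3
  · exact Or.inl h3
  · exact Or.inr (sub_eq_zero.mp h3)

lemma Tp_sq (d : ℕ) : Tp d * Tp d = Tp d := by
  rw [Tp]
  rw [smul_mul_smul_comm]
  rw [add_mul, mul_add, mul_add, Kg_sq]
  simp only [one_mul, mul_one]
  have h3 : (1 + Kg d + (Kg d + 1)) = (2:ℂ) • (1 + Kg d) := by rw [two_smul]; abel
  rw [h3, smul_smul]
  have h4 : ((2:ℂ)⁻¹ * 2⁻¹ * 2) = 2⁻¹ := by norm_num
  rw [h4]

lemma Tm_sq (d : ℕ) : Tm d * Tm d = Tm d := by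
  rw [Tm]
  rw [smul_mul_smul_comm]
  rw [sub_mul, mul_sub, mul_sub, Kg_sq]
  simp only [one_mul, mul_one]
  have : (1 - Kg d - (Kg d - 1)) = (2:ℂ) • (1 - Kg d) := by
    rw [two_smul]; abel
  rw [this, smul_smul]
  have h4 : ((2:ℂ)⁻¹ * 2⁻¹ * 2) = 2⁻¹ := by norm_num
  rw [h4]

lemma Tp_add_Tm (d : ℕ) : Tp d + Tm d = 1 := by
  rw [Tp, Tm, ← smul_add]
  have : (1 + Kg d + (1 - Kg d)) = (2:ℂ) • (1 : SF d) := by rw [two_smul]; abel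
  rw [this, smul_smul]
  have h4 : ((2:ℂ)⁻¹ * 2) = 1 := by norm_num
  rw [h4, one_smul]

lemma Tm_mul_Tp (d : ℕ) : Tm d * Tp d = 0 := by
  rw [Tp, Tm, smul_mul_smul_comm]
  rw [sub_mul, mul_add, mul_add, Kg_sq]
  simp only [one_mul, mul_one]
  have : (1 + Kg d - (Kg d + 1)) = 0 := by abel
  rw [this, smul_zero]

lemma Tp_mul_Tm (d : ℕ) : Tp d * Tm d = 0 := by
  rw [Tp, Tm, smul_mul_smul_comm]
  rw [add_mul, mul_sub, mul_sub, Kg_sq]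
  simp only [one_mul, mul_one]
  have : (1 - Kg d + (Kg d - 1)) = 0 := by abel
  rw [this, smul_zero]

@[simp] lemma ε_Tp (d : ℕ) : ε d (Tp d) = (1, 0) := by
  rw [Tp, map_smul, map_add, map_one, ε_Kg]
  rw [Prod.ext_iff]
  simp [Prod.smul_def]
  norm_num

@[simp] lemma ε_Tm (d : ℕ) : ε d (Tm d) = (0, 1) := by
  rw [Tm, map_smul, map_sub, map_one, ε_Kg]
  rw [Prod.ext_iff]
  simp [Prod.smul_def]
  norm_num

lemma Tp_ne_zero (d : ℕ) : Tp d ≠ 0 := fun h => by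
  have := ε_Tp d
  rw [h, map_zero] at this
  exact one_ne_zero (congrArg Prod.fst this).symm

lemma Tm_ne_zero (d : ℕ) : Tm d ≠ 0 := fun h => by
  have := ε_Tm d
  rw [h, map_zero] at this
  exact one_ne_zero (congrArg Prod.snd this).symm

/-- Corner triviality for Tp. -/
lemma corner_Tp {w : SF d} (hw : w * w = w) (h1 : Tp d * w = w) (h2 : w * Tp d = w) :
    w = 0 ∨ w = Tp d := by
  have hεw : (ε d w).2 = 0 := by
    have := congrArg (fun x => x.2) (congrArg (ε d) h2.symm)
    simpa [map_mul] using this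
  have hidem : (ε d w).1 * (ε d w).1 = (ε d w).1 := by
    have := congrArg (fun x => x.1) (congrArg (ε d) hw)
    simpa [map_mul] using this
  rcases c_idem hidem with hc | hc
  · left
    apply idem_eps_zero hw
    exact Prod.ext hc hεw
  · right
    have hw' : (Tp d - w) * (Tp d - w) = Tp d - w := by
      rw [sub_mul, mul_sub, mul_sub, Tp_sq, hw, h1, h2]
      abel
    have : Tp d - w = 0 := by
      apply idem_eps_zero hw'
      rw [map_sub, ε_Tp]
      rw [Prod.ext_iff]
      simp [hεw, hc]
    exact (sub_eq_zero.mp this).symm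

lemma corner_Tm {w : SF d} (hw : w * w = w) (h1 : Tm d * w = w) (h2 : w * Tm d = w) :
    w = 0 ∨ w = Tm d := by
  have hεw : (ε d w).1 = 0 := by
    have := congrArg (fun x => x.1) (congrArg (ε d) h2.symm)
    simpa [map_mul] using this
  have hidem : (ε d w).2 * (ε d w).2 = (ε d w).2 := by
    have := congrArg (fun x => x.2) (congrArg (ε d) hw)
    simpa [map_mul] using this
  rcases c_idem hidem with hc | hc
  · left
    apply idem_eps_zero hw
    exact Prod.ext hεw hc
  · right
    have hw' : (Tm d - w) * (Tm d - w) = Tm d - w := by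
      rw [sub_mul, mul_sub, mul_sub, Tm_sq, hw, h1, h2]
      abel
    have : Tm d - w = 0 := by
      apply idem_eps_zero hw'
      rw [map_sub, ε_Tm]
      rw [Prod.ext_iff]
      simp [hεw, hc]
    have := sub_eq_zero.mp this
    exact this.symm

end TpTm

section ModulePart
variable {d : ℕ}

lemma mem_span_idem {t x : SF d} (ht : t * t = t) :
    x ∈ Submodule.span (SF d) {t} ↔ x * t = x := by
  rw [Submodule.mem_span_singleton]
  constructor
  · rintro ⟨a, rfl⟩
    rw [smul_eq_mul, mul_assoc, ht]
  · intro h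
    exact ⟨x, by rw [smul_eq_mul, h]⟩

lemma proj_span_idem (t : SF d) (ht : t * t = t) :
    Module.Projective (SF d) ↥(Submodule.span (SF d) {t}) := by
  set Q := Submodule.span (SF d) {t} with hQ
  have hmem : ∀ x : SF d, x * t ∈ Q := fun x =>
    (mem_span_idem ht).mpr (by rw [mul_assoc, ht])
  let s : SF d →ₗ[SF d] Q :=
    LinearMap.codRestrict Q (LinearMap.toSpanSingleton (SF d) (SF d) t) (fun x => by
      simpa [smul_eq_mul] using hmem x)
  refine Module.Projective.of_split Q.subtype s ?_
  ext q
  have : (q : SF d) * t = (q : SF d) := (mem_span_idem ht).mp q.2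
  simp [s, LinearMap.toSpanSingleton, smul_eq_mul, this]

lemma indec_span_idem (t : SF d) (ht : t * t = t)
    (htriv : ∀ w : SF d, w * w = w → t * w = w → w * t = w → w = 0 ∨ w = t) :
    ∀ N₁ N₂ : Submodule (SF d) ↥(Submodule.span (SF d) {t}), IsCompl N₁ N₂ →
      N₁ = ⊥ ∨ N₂ = ⊥ := by
  intro N₁ N₂ h
  have htQ : t ∈ Submodule.span (SF d) {t} := Submodule.subset_span rfl
  set te : ↥(Submodule.span (SF d) {t}) := ⟨t, htQ⟩ with hte
  set pr := N₁.projectionOnto N₂ h with hpr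
  set π : ↥(Submodule.span (SF d) {t}) →ₗ[SF d] ↥(Submodule.span (SF d) {t}) :=
    N₁.subtype.comp pr with hπ
  set u : SF d := (π te : SF d) with hu
  have hut : u * t = u := (mem_span_idem ht).mp (π te).2
  have key : ∀ q, (π q : SF d) = (q : SF d) * u := by
    intro q
    have hq : q = (q : SF d) • te := by
      apply Subtype.ext
      have : (q : SF d) * t = (q : SF d) := (mem_span_idem ht).mp q.2
      simp [te, smul_eq_mul, this]
    conv_lhs => rw [hq]
    rw [map_smul]
    rfl
  have hfix : ∀ q, q ∈ N₁ → π q = q := by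
    intro q hq
    have : pr q = ⟨q, hq⟩ := by
      have := Submodule.projectionOnto_apply_left h ⟨q, hq⟩
      simpa [hpr] using this
    show ((pr q : ↥N₁) : ↥(Submodule.span (SF d) {t})) = q
    rw [this]
  have hππ : ∀ q, π (π q) = π q := fun q => hfix (π q) (pr q).2
  have huu : u * u = u := by
    have h1 := key (π te)
    rw [hππ te] at h1
    exact h1.symm
  set w : SF d := t * u with hw
  have hw1 : w * w = w := by
    rw [hw, mul_assoc, ← mul_assoc u t u, hut, ← mul_assoc, mul_assoc t u u, huu]
  have hw2 : t * w = w := by rw [hw, ← mul_assoc, ht]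
  have hw3 : w * t = w := by rw [hw, mul_assoc, hut]
  rcases htriv w hw1 hw2 hw3 with h0 | h1
  · left
    rw [Submodule.eq_bot_iff]
    intro x hx
    have hπx := hfix x hx
    have hxu : (x : SF d) = (x : SF d) * u := by rw [← key x, hπx]
    have hxt : (x : SF d) * t = (x : SF d) := (mem_span_idem ht).mp x.2
    have : (x : SF d) = 0 := by
      rw [hxu, ← hxt, mul_assoc, ← hw, h0, mul_zero]
    exact Subtype.ext this
  · right
    rw [Submodule.eq_bot_iff]
    intro x hx
    have hπx : π x = 0 := by
      have : pr x = 0 := Submodule.projectionOnto_apply_of_mem_right h hx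
      show ((pr x : ↥N₁) : ↥(Submodule.span (SF d) {t})) = 0
      rw [this]
      rfl
    have hxu : (x : SF d) * u = 0 := by
      rw [← key x, hπx]; simp
    have hxt : (x : SF d) * t = (x : SF d) := (mem_span_idem ht).mp x.2
    have h5 : t = t * u := by rw [← h1, hw, mul_assoc, huu]
    have : (x : SF d) = 0 := by
      calc (x : SF d) = (x : SF d) * t := hxt.symm
        _ = (x : SF d) * (t * u) := by rw [← h5]
        _ = ((x : SF d) * t) * u := by rw [mul_assoc]
        _ = (x : SF d) * u := by rw [hxt]
        _ = 0 := hxu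
    exact Subtype.ext this

lemma prim_idem (t : SF d) (ht : t * t = t) (hne : t ≠ 0)
    (htriv : ∀ w : SF d, w * w = w → t * w = w → w * t = w → w = 0 ∨ w = t) :
    IsPrimitiveIdempotent t := by
  refine ⟨ht, hne, ?_⟩
  intro a b ha hb hab hba hsum
  have h1 : t * a = a := by rw [← hsum, add_mul, ha, hba, add_zero]
  have h2 : a * t = a := by rw [← hsum, mul_add, ha, hab, add_zero]
  rcases htriv a ha h1 h2 with h0 | h1'
  · exact Or.inl h0
  · right
    have : b = t - a := by rw [← hsum]; abel
    rw [this, h1', sub_self]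

end ModulePart

theorem Tpm_primitive_Qpm_indecomposable_projective' (d : ℕ) :
    IsPrimitiveIdempotent (Tp d) ∧ IsPrimitiveIdempotent (Tm d) ∧
    Module.Projective (SF d) ↥(Qp d) ∧ Module.Projective (SF d) ↥(Qm d) ∧
    (∀ N₁ N₂ : Submodule (SF d) ↥(Qp d), IsCompl N₁ N₂ → N₁ = ⊥ ∨ N₂ = ⊥) ∧
    (∀ N₁ N₂ : Submodule (SF d) ↥(Qm d), IsCompl N₁ N₂ → N₁ = ⊥ ∨ N₂ = ⊥) ∧
    IsCompl (Qp d) (Qm d) := by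
  have htrivp : ∀ w : SF d, w * w = w → Tp d * w = w → w * Tp d = w → w = 0 ∨ w = Tp d :=
    fun w hw h1 h2 => corner_Tp hw h1 h2
  have htrivm : ∀ w : SF d, w * w = w → Tm d * w = w → w * Tm d = w → w = 0 ∨ w = Tm d :=
    fun w hw h1 h2 => corner_Tm hw h1 h2
  refine ⟨prim_idem _ (Tp_sq d) (Tp_ne_zero d) htrivp,
    prim_idem _ (Tm_sq d) (Tm_ne_zero d) htrivm,
    proj_span_idem _ (Tp_sq d), proj_span_idem _ (Tm_sq d),
    indec_span_idem _ (Tp_sq d) htrivp, indec_span_idem _ (Tm_sq d) htrivm, ?_⟩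
  constructor
  · rw [Submodule.disjoint_def]
    intro x hxp hxm
    have h1 : x * Tp d = x := (mem_span_idem (Tp_sq d)).mp hxp
    have h2 : x * Tm d = x := (mem_span_idem (Tm_sq d)).mp hxm
    rw [← h1, ← h2, mul_assoc, Tm_mul_Tp, mul_zero]
  · rw [codisjoint_iff, eq_top_iff]
    intro x _
    have : x = x * Tp d + x * Tm d := by
      rw [← mul_add, Tp_add_Tm, mul_one]
    rw [this]
    refine Submodule.add_mem _ (Submodule.mem_sup_left ?_) (Submodule.mem_sup_right ?_)
    · exact (mem_span_idem (Tp_sq d)).mpr (by rw [mul_assoc, Tp_sq])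
    · exact (mem_span_idem (Tm_sq d)).mpr (by rw [mul_assoc, Tm_sq])


/-- `T± = (1 ± K)/2` are primitive idempotents of `P`, and `Q± = P·T±` are
indecomposable projective left `P`-modules with `P = Q⁺ ⊕ Q⁻`. -/
theorem Tpm_primitive_Qpm_indecomposable_projective (d : ℕ) :
    IsPrimitiveIdempotent (Tp d) ∧ IsPrimitiveIdempotent (Tm d) ∧
    Module.Projective (SF d) ↥(Qp d) ∧ Module.Projective (SF d) ↥(Qm d) ∧
    (∀ N₁ N₂ : Submodule (SF d) ↥(Qp d), IsCompl N₁ N₂ → N₁ = ⊥ ∨ N₂ = ⊥) ∧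
    (∀ N₁ N₂ : Submodule (SF d) ↥(Qm d), IsCompl N₁ N₂ → N₁ = ⊥ ∨ N₂ = ⊥) ∧
    IsCompl (Qp d) (Qm d) := by
  exact Tpm_primitive_Qpm_indecomposable_projective' d
end

section
/- Let P be the algebra above with symmetrizing form φ, and let c ∈ Z(P) be an even-length central basis monomial that is not a monomial of the form ∏_{i∈S} e_i f_i for a subset S and not (∏_{i=1}^d e_i f_i)K. Then c ν^{d−k} = 0, where ν = Σ_{i=1}^d e_i f_i and 2k is the length of c. -/
/-- `ν = Σᵢ eᵢ fᵢ`. -/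
noncomputable def nuSF (d : ℕ) : SF d := ∑ i : Fin d, eg d i * fg d i

section Aux
variable {d : ℕ}

lemma SF_ee (i j : Fin d) : eg d i * eg d j = -(eg d j * eg d i) := by
  have h := RingQuot.mkAlgHom_rel ℂ (SFRel.ee i j)
  simp only [map_mul, map_neg] at h; exact h

lemma SF_ff (i j : Fin d) : fg d i * fg d j = -(fg d j * fg d i) := by
  have h := RingQuot.mkAlgHom_rel ℂ (SFRel.ff i j)
  simp only [map_mul, map_neg] at h; exact h

lemma SF_ef (i j : Fin d) : eg d i * fg d j = -(fg d j * eg d i) := by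
  have h := RingQuot.mkAlgHom_rel ℂ (SFRel.ef i j)
  simp only [map_mul, map_neg] at h; exact h

lemma SF_fe (i j : Fin d) : fg d i * eg d j = -(eg d j * fg d i) := by
  rw [SF_ef j i, neg_neg]

lemma eg_sq (i : Fin d) : eg d i * eg d i = 0 := by
  have h := SF_ee i i
  have h2 : (2:ℂ) • (eg d i * eg d i) = 0 := by
    rw [two_smul]; nth_rewrite 2 [h]; exact add_neg_cancel _
  have := smul_eq_zero.mp h2
  simpa using this

lemma fg_sq (i : Fin d) : fg d i * fg d i = 0 := by
  have h := SF_ff i i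
  have h2 : (2:ℂ) • (fg d i * fg d i) = 0 := by
    rw [two_smul]; nth_rewrite 2 [h]; exact add_neg_cancel _
  have := smul_eq_zero.mp h2
  simpa using this

noncomputable def pairSF (d : ℕ) (i : Fin d) : SF d := eg d i * fg d i

lemma eg_comm_pair (i j : Fin d) : Commute (pairSF d i) (eg d j) := by
  unfold Commute SemiconjBy pairSF
  rw [mul_assoc, SF_fe i j, mul_neg, ← mul_assoc, SF_ee i j, neg_mul, neg_neg, mul_assoc]

lemma fg_comm_pair (i j : Fin d) : Commute (pairSF d i) (fg d j) := by
  unfold Commute SemiconjBy pairSF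
  rw [mul_assoc, SF_ff i j, mul_neg, ← mul_assoc, SF_ef i j, neg_mul, neg_neg, mul_assoc]

lemma Kg_comm_pair (i : Fin d) : Commute (pairSF d i) (Kg d) := by
  have hKe : Kg d * eg d i = -(eg d i * Kg d) := by
    have h := RingQuot.mkAlgHom_rel ℂ (SFRel.Ke i)
    simp only [map_mul, map_neg] at h; exact h
  have hKf : Kg d * fg d i = -(fg d i * Kg d) := by
    have h := RingQuot.mkAlgHom_rel ℂ (SFRel.Kf i)
    simp only [map_mul, map_neg] at h; exact h
  have heK : eg d i * Kg d = -(Kg d * eg d i) := by rw [hKe, neg_neg]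
  have hfK : fg d i * Kg d = -(Kg d * fg d i) := by rw [hKf, neg_neg]
  have heK2 : eg d i * Kg d = -(Kg d * eg d i) := by rw [hKe, neg_neg]
  unfold Commute SemiconjBy pairSF
  rw [mul_assoc, hfK, mul_neg, ← mul_assoc, heK2, neg_mul, neg_neg, mul_assoc]

/-- the `j`-th block of the monomial -/
noncomputable def blk (d : ℕ) (m n : Fin d → Bool) (j : Fin d) : SF d :=
  (if m j then eg d j else 1) * (if n j then fg d j else 1)

lemma pair_comm_blk (i : Fin d) (m n : Fin d → Bool) (j : Fin d) :
    Commute (pairSF d i) (blk d m n j) := by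
  unfold blk
  apply Commute.mul_right <;> split
  · exact eg_comm_pair i j
  · exact Commute.one_right _
  · exact fg_comm_pair i j
  · exact Commute.one_right _

lemma prod_set_mul {M : Type*} [Monoid M] (L : List M) (z : M)
    (hz : ∀ x ∈ L, Commute z x) :
    ∀ i : ℕ, (hi : i < L.length) → (L.set i (L[i] * z)).prod = L.prod * z := by
  induction L with
  | nil => intro i hi; simp at hi
  | cons a t ih =>
    intro i hi
    cases i with
    | zero =>
      simp only [List.set, List.prod_cons, List.getElem_cons_zero]
      have hc : Commute z t.prod :=
        Commute.list_prod_right _ _ (fun x hx => hz x (List.mem_cons_of_mem a hx))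
      rw [mul_assoc, hc.eq, ← mul_assoc]
    | succ i =>
      simp only [List.set, List.prod_cons, List.getElem_cons_succ]
      rw [ih (fun x hx => hz x (List.mem_cons_of_mem a hx)) i (by simpa using hi), mul_assoc]

lemma SFmono_false (m n : Fin d → Bool) :
    SFmono d m n false = (List.ofFn (blk d m n)).prod := by
  unfold SFmono blk
  simp

lemma SFmono_mul_pair (m n : Fin d → Bool) (i : Fin d) :
    SFmono d m n false * pairSF d i =
      ((List.ofFn (blk d m n)).set i.1 (blk d m n i * pairSF d i)).prod := by
  have hz : ∀ x ∈ List.ofFn (blk d m n), Commute (pairSF d i) x := by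
    intro x hx
    obtain ⟨j, rfl⟩ := List.mem_ofFn.mp hx
    exact pair_comm_blk i m n j
  have hi : i.1 < (List.ofFn (blk d m n)).length := by simp [i.2]
  have key := prod_set_mul (List.ofFn (blk d m n)) (pairSF d i) hz i.1 hi
  have hget : (List.ofFn (blk d m n))[i.1] = blk d m n i := by
    rw [List.getElem_ofFn, Fin.eta]
  rw [hget] at key
  rw [key, SFmono_false]

lemma SFmono_mul_pair_of_not_mem (m n : Fin d → Bool) (i : Fin d)
    (hm : m i = false) (hn : n i = false) :
    SFmono d m n false * pairSF d i =
      SFmono d (Function.update m i true) (Function.update n i true) false := by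
  rw [SFmono_mul_pair]
  have hset : (List.ofFn (blk d m n)).set i.1 (blk d m n i * pairSF d i) =
      List.ofFn (blk d (Function.update m i true) (Function.update n i true)) := by
    apply List.ext_getElem
    · simp
    · intro j hj hj'
      rw [List.getElem_set, List.getElem_ofFn]
      by_cases h : i.1 = j
      · subst h
        simp only [if_pos rfl, Fin.eta]
        unfold blk pairSF
        simp [hm, hn]
      · simp only [if_neg h]
        rw [List.getElem_ofFn]
        have h' : ¬ j = i.1 := fun hc => h hc.symm
        simp [blk, Function.update_apply, Fin.ext_iff, h']
  rw [hset, SFmono_false]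

lemma SFmono_mul_pair_of_mem (m n : Fin d → Bool) (i : Fin d)
    (h : m i = true ∨ n i = true) :
    SFmono d m n false * pairSF d i = 0 := by
  rw [SFmono_mul_pair]
  have hz : blk d m n i * pairSF d i = 0 := by
    unfold blk pairSF
    cases hm : m i <;> cases hn : n i
    · rw [hm, hn] at h; simp at h
    · simp only [hm, hn]
      simp only [Bool.false_eq_true, if_false, if_true, one_mul]
      rw [← mul_assoc, SF_fe i i, neg_mul, mul_assoc, fg_sq, mul_zero, neg_zero]
    · simp only [hm, hn]
      simp only [Bool.false_eq_true, if_false, if_true, mul_one]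
      rw [← mul_assoc, eg_sq, zero_mul]
    · simp only [hm, hn, if_true]
      simp only [mul_assoc]
      rw [← mul_assoc (fg d i) (eg d i), SF_fe i i, neg_mul, mul_neg,
        mul_assoc (eg d i) (fg d i), ← mul_assoc (eg d i) (eg d i)]
      rw [eg_sq, zero_mul, neg_zero]
  rw [hz]
  apply List.prod_eq_zero
  have hi : i.1 < ((List.ofFn (blk d m n)).set i.1 (0 : SF d)).length := by simp [i.2]
  have := List.getElem_mem hi
  rwa [List.getElem_set, if_pos rfl] at this

lemma filter_update_true (m : Fin d → Bool) (i : Fin d) :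
    (Finset.univ.filter (fun j => Function.update m i true j = true)) =
      insert i (Finset.univ.filter (fun j => m j = true)) := by
  ext j
  by_cases h : j = i
  · subst h; simp [Function.update_self]
  · simp [Function.update_of_ne h, h]

lemma mainSF_aux : ∀ (t : ℕ) (m n : Fin d → Bool),
    d < ((Finset.univ.filter (fun i => m i = true)) ∪
        (Finset.univ.filter (fun i => n i = true))).card + t →
    SFmono d m n false * (nuSF d) ^ t = 0 := by
  intro t
  induction t with
  | zero =>
    intro m n h
    exfalso
    have := Finset.card_le_univ ((Finset.univ.filter (fun i => m i = true)) ∪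
        (Finset.univ.filter (fun i => n i = true)))
    simp only [Finset.card_univ, Fintype.card_fin] at this
    omega
  | succ t ih =>
    intro m n h
    rw [pow_succ', ← mul_assoc]
    have hc : SFmono d m n false * nuSF d = ∑ i : Fin d, SFmono d m n false * pairSF d i := by
      rw [nuSF, Finset.mul_sum]; rfl
    rw [hc, Finset.sum_mul]
    apply Finset.sum_eq_zero
    intro i _
    by_cases hi : m i = true ∨ n i = true
    · rw [SFmono_mul_pair_of_mem m n i hi, zero_mul]
    · simp only [not_or, Bool.not_eq_true] at hi
      obtain ⟨hm, hn⟩ := hi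
      rw [SFmono_mul_pair_of_not_mem m n i hm hn]
      apply ih
      rw [filter_update_true m i, filter_update_true n i, Finset.insert_union, Finset.union_insert, Finset.insert_idem,
        Finset.card_insert_of_notMem]
      · omega
      · simp [hm, hn]

end Aux

/-- If `c = ∏ᵢ e iᵐⁱ f iⁿⁱ` is an even-length central basis monomial of
length `2k` (`k < d`) which is not of the form `∏_{i∈S} eᵢfᵢ` (i.e. `m ≠ n`), then
`c ν^(d−k) = 0`, where `ν = Σᵢ eᵢfᵢ`. -/
theorem central_monomial_mul_nu_pow_eq_zero (d : ℕ) (m n : Fin d → Bool) (k : ℕ)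
    (hlen : (Finset.univ.filter (fun i => m i = true)).card +
        (Finset.univ.filter (fun i => n i = true)).card = 2 * k)
    (hk : k < d) (hmn : m ≠ n) :
    SFmono d m n false * (nuSF d) ^ (d - k) = 0 := by
  set A := Finset.univ.filter (fun i => m i = true) with hA
  set B := Finset.univ.filter (fun i => n i = true) with hB
  have hAB : A ≠ B := by
    intro hEq
    apply hmn
    funext j
    have : (j ∈ A) ↔ (j ∈ B) := by rw [hEq]
    simp only [hA, hB, Finset.mem_filter, Finset.mem_univ, true_and] at this
    cases hmj : m j <;> cases hnj : n j <;> simp_all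
  have hcard := Finset.card_union_add_card_inter A B
  have hlt : (A ∩ B).card < (A ∪ B).card := by
    rcases lt_or_eq_of_le (Finset.card_le_card (Finset.inter_subset_union (s := A) (t := B))) with h | h
    · exact h
    · exfalso
      have hIU : A ∩ B = A ∪ B :=
        Finset.eq_of_subset_of_card_le Finset.inter_subset_union (le_of_eq h.symm)
      apply hAB
      apply Finset.Subset.antisymm
      · intro x hx
        have : x ∈ A ∩ B := by rw [hIU]; exact Finset.mem_union_left _ hx
        exact (Finset.mem_inter.mp this).2
      · intro x hx
        have : x ∈ A ∩ B := by rw [hIU]; exact Finset.mem_union_right _ hx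
        exact (Finset.mem_inter.mp this).1
  apply mainSF_aux
  have he : (Finset.univ.filter (fun i => m i = true) ∪
      Finset.univ.filter (fun i => n i = true)) = A ∪ B := rfl
  rw [he]
  omega
end
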